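/- Every increasing (with respect to ⊑) sequence (t_n) of trees labelled by possibly-incomplete judgements has a least upper bound with respect to ⊑. -/

import Mathlib

/-- Judgements over configurations `C` and extended results `Option R`
    (`none` stands for the special extra result such as `?`, `wrong`, or `∞`). -/
abbrev Judg (C R : Type) := C × Option R

/-- Lift a complete judgement to an extended judgement. -/
def liftJ {C R : Type} (j : C × R) : Judg C R := (j.1, some j.2)

/-- Bounded-premises condition. -/
def BP {C R : Type} (Rules : Set (List (C × R) × (C × R))) : Prop :=
  ∀ c : C, ∃ b : ℕ, ∀ js res, (js, (c, res)) ∈ Rules → js.length ≤ b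

/-- The extended rule set `Rules_?`: original rules (lifted), start axioms
    `c ⇒ ?`, and partial rules. -/
def RulesQ {C R : Type} (Rules : Set (List (C × R) × (C × R))) :
    Set (List (Judg C R) × Judg C R) :=
  { r | (∃ c : C, r = ([], (c, none)))
      ∨ (∃ (js : List (C × R)) (c : C) (res : R), (js, (c, res)) ∈ Rules ∧ r = (js.map liftJ, (c, some res)))
      ∨ (∃ (js : List (C × R)) (c : C) (res : R) (i : ℕ) (hi : i < js.length) (u : Option R),
          (js, (c, res)) ∈ Rules ∧
          r = ((js.take i).map liftJ ++ [((js[i]'hi).1, u)], (c, none))) }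

/-- Ordered trees labelled in `L`: partial functions from positions (lists of
    child indices) to labels, with nonempty, prefix-closed,
    sibling-downward-closed domain. -/
structure OTree (L : Type) where
  label : List ℕ → Option L
  root_isSome : (label []).isSome
  pref : ∀ α n, (label (α ++ [n])).isSome → (label α).isSome
  sib : ∀ α n k, (label (α ++ [n])).isSome → k ≤ n → (label (α ++ [k])).isSome

/-- A tree is an evaluation tree in a rule set: at every node, the ordered
    children labels together with the node label form a rule. -/
def IsTreeIn {L : Type} (Rules : Set (List L × L)) (t : OTree L) : Prop :=
  ∀ α l, t.label α = some l →
    ∃ ps : List L, (∀ i : ℕ, t.label (α ++ [i]) = ps[i]?) ∧ (ps, l) ∈ Rules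

/-- Partial evaluation trees: evaluation trees in `Rules_?`. -/
def IsPET {C R : Type} (Rules : Set (List (C × R) × (C × R)))
    (t : OTree (Judg C R)) : Prop :=
  IsTreeIn (RulesQ Rules) t

/-- The refinement relation `⊑` on trees labelled by possibly-incomplete
    judgements. -/
def TreeLE {C R : Type} (t t' : OTree (Judg C R)) : Prop :=
  (∀ α, (t.label α).isSome → (t'.label α).isSome) ∧
  ∀ α c u, t.label α = some (c, u) →
    (∃ (u' : Option R), t'.label α = some (c, u')) ∧
    (u.isSome → ∀ β, t.label (α ++ β) = t'.label (α ++ β))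

/-- Strict refinement `⊏`. -/
def TreeLT {C R : Type} (t t' : OTree (Judg C R)) : Prop :=
  TreeLE t t' ∧ t ≠ t'

/-- A tree is finite if its domain is finite. -/
def TreeFinite {L : Type} (t : OTree L) : Prop :=
  Set.Finite {α | (t.label α).isSome}

/-- Well-formedness: every subtree rooted at a complete node is finite. -/
def WellFormed {C R : Type} (t : OTree (Judg C R)) : Prop :=
  ∀ α c r, t.label α = some (c, some r) →
    Set.Finite {β | (t.label (α ++ β)).isSome}

/-- `t` is a least upper bound of the sequence `f` w.r.t. `⊑`. -/
def IsLubSeq {C R : Type} (f : ℕ → OTree (Judg C R)) (t : OTree (Judg C R)) : Prop :=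
  (∀ n, TreeLE (f n) t) ∧ ∀ t', (∀ n, TreeLE (f n) t') → TreeLE t t'

/-- Inductive derivability in a rule set with finite-list premises. -/
inductive IndDerives {J : Type} (Rules : Set (List J × J)) : J → Prop where
  | node (ps : List J) (j : J) : (ps, j) ∈ Rules →
      (∀ p ∈ ps, IndDerives Rules p) → IndDerives Rules j

/-- A set of judgements is consistent w.r.t. a rule set. -/
def ConsistentL {J : Type} (Rules : Set (List J × J)) (X : Set J) : Prop :=
  ∀ j ∈ X, ∃ (ps : List J), (ps, j) ∈ Rules ∧ ∀ p ∈ ps, p ∈ X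

/-- Coinductive derivability: membership in some consistent set. -/
def CoDerives {J : Type} (Rules : Set (List J × J)) (j : J) : Prop :=
  ∃ (X : Set J), ConsistentL Rules X ∧ j ∈ X

/-- Derivability in a generalised inference system (rules + corules):
    membership in a consistent set all of whose elements have a finite
    derivation using both rules and corules. -/
def GenDerives {J : Type} (rules corules : Set (List J × J)) (j : J) : Prop :=
  ∃ (X : Set J), ConsistentL rules X ∧ (∀ x ∈ X, IndDerives (rules ∪ corules) x) ∧ j ∈ X

/-!
Along an increasing sequence the label at each position changes at most twice: from undefined to
`c ⇒ ?`, and from there to a complete `c ⇒ r`, after which the whole subtree below it is frozen.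
So the labels stabilise pointwise, and the tree of eventual labels is the least upper bound.
-/

open Filter

namespace TreeLE

variable {C R : Type} {t t' t'' : OTree (Judg C R)}

lemma exists_label_eq (h : TreeLE t t') {α : List ℕ} {c : C} {u : Option R}
    (hα : t.label α = some (c, u)) : ∃ u', t'.label α = some (c, u') :=
  (h.2 α c u hα).1

lemma label_append_eq (h : TreeLE t t') {α : List ℕ} {c : C} {r : R}
    (hα : t.label α = some (c, some r)) (β : List ℕ) :
    t'.label (α ++ β) = t.label (α ++ β) :=
  ((h.2 α c _ hα).2 rfl β).symm

lemma label_eq (h : TreeLE t t') {α : List ℕ} {c : C} {r : R}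
    (hα : t.label α = some (c, some r)) : t'.label α = t.label α := by
  simpa using h.label_append_eq hα []

lemma refl (t : OTree (Judg C R)) : TreeLE t t :=
  ⟨fun _ h => h, fun _ _ u h => ⟨⟨u, h⟩, fun _ _ => rfl⟩⟩

lemma trans (h : TreeLE t t') (h' : TreeLE t' t'') : TreeLE t t'' := by
  refine ⟨fun α hα => h'.1 α (h.1 α hα), fun α c u hα => ?_⟩
  obtain ⟨u', hα'⟩ := h.exists_label_eq hα
  obtain ⟨u'', hα''⟩ := h'.exists_label_eq hα'
  refine ⟨⟨u'', hα''⟩, fun hu β => ?_⟩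
  obtain ⟨r, rfl⟩ := Option.isSome_iff_exists.mp hu
  have hα' : t'.label α = some (c, some r) := (h.label_eq hα).trans hα
  exact ((h'.label_append_eq hα' β).trans (h.label_append_eq hα β)).symm

end TreeLE

instance {C R : Type} : Preorder (OTree (Judg C R)) where
  le := TreeLE
  le_refl := TreeLE.refl
  le_trans _ _ _ := TreeLE.trans

noncomputable def eventualValue {β : Type*} [Nonempty β] (s : ℕ → β) : β :=
  Classical.epsilon fun b => ∀ᶠ n in atTop, s n = b

lemma eventually_eq_eventualValue {β : Type*} [Nonempty β] {s : ℕ → β}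
    (h : ∃ b, ∀ᶠ n in atTop, s n = b) : ∀ᶠ n in atTop, s n = eventualValue s :=
  Classical.epsilon_spec h

namespace OTree

noncomputable def lubLabel {C R : Type} (f : ℕ → OTree (Judg C R)) (α : List ℕ) :
    Option (Judg C R) :=
  eventualValue fun n => (f n).label α

variable {C R : Type} {f : ℕ → OTree (Judg C R)} (hf : Monotone f)
include hf

lemma exists_eventually_label_eq (α : List ℕ) :
    ∃ x, ∀ᶠ n in atTop, (f n).label α = x := by
  by_cases hcomplete : ∃ n c r, (f n).label α = some (c, some r)
  · obtain ⟨n, c, r, hn⟩ := hcomplete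
    exact ⟨_, eventually_atTop.2 ⟨n, fun m hnm => TreeLE.label_eq (hf hnm) hn⟩⟩
  push Not at hcomplete
  by_cases hdefined : ∃ n, ((f n).label α).isSome
  · obtain ⟨n, hn⟩ := hdefined
    obtain ⟨⟨c, u⟩, hn⟩ := Option.isSome_iff_exists.mp hn
    refine ⟨some (c, none), eventually_atTop.2 ⟨n, fun m hnm => ?_⟩⟩
    obtain ⟨u', hm⟩ := TreeLE.exists_label_eq (hf hnm) hn
    cases u' with
    | none => exact hm
    | some r => exact absurd hm (hcomplete m c r)
  · push Not at hdefined
    exact ⟨none, Eventually.of_forall fun n => by simpa using hdefined n⟩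

lemma eventually_label_eq_lubLabel (α : List ℕ) :
    ∀ᶠ n in atTop, (f n).label α = lubLabel f α :=
  eventually_eq_eventualValue (exists_eventually_label_eq hf α)

lemma lubLabel_isSome_iff (α : List ℕ) :
    (lubLabel f α).isSome ↔ ∃ n, ((f n).label α).isSome := by
  constructor
  · intro h
    obtain ⟨n, hn⟩ := (eventually_label_eq_lubLabel hf α).exists
    exact ⟨n, hn ▸ h⟩
  · rintro ⟨n, hn⟩
    obtain ⟨m, hm, hnm⟩ :=
      ((eventually_label_eq_lubLabel hf α).and (eventually_ge_atTop n)).exists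
    exact hm ▸ (hf hnm).1 α hn

lemma lubLabel_append_of_complete {n : ℕ} {α : List ℕ} {c : C} {r : R}
    (hα : (f n).label α = some (c, some r)) (β : List ℕ) :
    lubLabel f (α ++ β) = (f n).label (α ++ β) := by
  obtain ⟨m, hm, hnm⟩ :=
    ((eventually_label_eq_lubLabel hf (α ++ β)).and (eventually_ge_atTop n)).exists
  rw [← hm, TreeLE.label_append_eq (hf hnm) hα]

noncomputable def lub : OTree (Judg C R) where
  label := lubLabel f
  root_isSome := (lubLabel_isSome_iff hf []).2 ⟨0, (f 0).root_isSome⟩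
  pref α n h := by
    obtain ⟨m, hm⟩ := (lubLabel_isSome_iff hf _).1 h
    exact (lubLabel_isSome_iff hf α).2 ⟨m, (f m).pref α n hm⟩
  sib α n k h hkn := by
    obtain ⟨m, hm⟩ := (lubLabel_isSome_iff hf _).1 h
    exact (lubLabel_isSome_iff hf _).2 ⟨m, (f m).sib α n k hm hkn⟩

lemma le_lub (n : ℕ) : f n ≤ lub hf := by
  refine ⟨fun α hα => (lubLabel_isSome_iff hf α).2 ⟨n, hα⟩, fun α c u hα => ⟨?_, ?_⟩⟩
  · obtain ⟨m, hm, hnm⟩ :=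
      ((eventually_label_eq_lubLabel hf α).and (eventually_ge_atTop n)).exists
    show ∃ u', lubLabel f α = some (c, u')
    rw [← hm]
    exact TreeLE.exists_label_eq (hf hnm) hα
  · intro hu β
    obtain ⟨r, rfl⟩ := Option.isSome_iff_exists.mp hu
    exact (lubLabel_append_of_complete hf hα β).symm

lemma lub_le {t : OTree (Judg C R)} (ht : ∀ n, f n ≤ t) : lub hf ≤ t := by
  refine ⟨fun α hα => ?_, fun α c u hα => ?_⟩
  · obtain ⟨n, hn⟩ := (lubLabel_isSome_iff hf α).1 hα
    exact (ht n).1 α hn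
  · obtain ⟨n, hn⟩ := (eventually_label_eq_lubLabel hf α).exists
    replace hn : (f n).label α = some (c, u) := hn.trans hα
    refine ⟨TreeLE.exists_label_eq (ht n) hn, fun hu β => ?_⟩
    obtain ⟨r, rfl⟩ := Option.isSome_iff_exists.mp hu
    exact (lubLabel_append_of_complete hf hn β).trans (TreeLE.label_append_eq (ht n) hn β).symm

theorem isLubSeq_lub : IsLubSeq f (lub hf) :=
  ⟨le_lub hf, fun _ => lub_le hf⟩

end OTree

theorem increasing_seq_has_lub {C R : Type} (f : ℕ → OTree (Judg C R))
    (hmono : ∀ n, TreeLE (f n) (f (n + 1))) :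
    ∃ t : OTree (Judg C R), IsLubSeq f t :=
  ⟨_, OTree.isLubSeq_lub (monotone_nat_of_le_succ hmono)⟩
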